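/- Let h : S → ℕ be a bounded function defined on the rational regular points of the sphere of rays S of a finite-dimensional real vector space (where the regular points form a dense open subset and the rational points are dense in it), satisfying local maximality: every rational regular point b has the property that for some neighborhood U of b, h(a) ≤ h(b) for all rational regular a ∈ U. Then h extends to a function on all of S that is bounded and locally maximal. -/

import Mathlib

/-!
The extension is the lim sup of `h` along `Q`, truncated at the bound `N`: `H z` is the
largest `n ≤ N` such that `z` lies in the closure of `{a ∈ Q | n ≤ h a}` (`0` if there is
none).  These closures are closed and decrease in `n`, so `H` is upper semicontinuous,
which for an `ℕ`-valued function is local maximality.  On `Q` the closure condition is tested by the neighborhood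
on which `h` is maximal at `x`, so nothing larger than `h x` survives and `H = h` there.
-/

open Filter Topology

section LimsupEnvelope

variable {X : Type*} (Q : Set X) (h : X → ℕ) (N : ℕ)

def superlevelOn (n : ℕ) : Set X := {a | a ∈ Q ∧ n ≤ h a}

lemma superlevelOn_antitone : Antitone (superlevelOn Q h) :=
  fun _ _ hmn _ ha => ⟨ha.1, hmn.trans ha.2⟩

variable [TopologicalSpace X]

open Classical in
noncomputable def limsupEnvelope (z : X) : ℕ :=
  Nat.findGreatest (fun n => z ∈ closure (superlevelOn Q h n)) N

variable {Q h N}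

lemma limsupEnvelope_le (z : X) : limsupEnvelope Q h N z ≤ N := by
  classical
  exact Nat.findGreatest_le N

lemma le_limsupEnvelope {n : ℕ} {z : X} (hn : n ≤ N) (hz : z ∈ closure (superlevelOn Q h n)) :
    n ≤ limsupEnvelope Q h N z := by
  classical
  exact Nat.le_findGreatest hn hz

lemma mem_closure_superlevelOn_limsupEnvelope {z : X} (hz : limsupEnvelope Q h N z ≠ 0) :
    z ∈ closure (superlevelOn Q h (limsupEnvelope Q h N z)) := by
  classical
  exact Nat.findGreatest_of_ne_zero rfl hz

lemma limsupEnvelope_eq_of_mem {x : X} (hx : x ∈ Q) (hxN : h x ≤ N)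
    (hmax : ∃ U ∈ 𝓝 x, ∀ a ∈ Q ∩ U, h a ≤ h x) :
    limsupEnvelope Q h N x = h x := by
  refine le_antisymm ?_ (le_limsupEnvelope hxN (subset_closure ⟨hx, le_rfl⟩))
  by_contra! hlt
  obtain ⟨U, hU, hUmax⟩ := hmax
  obtain ⟨a, haU, haQ, hxa⟩ := mem_closure_iff_nhds.mp
    (mem_closure_superlevelOn_limsupEnvelope (Nat.zero_lt_of_lt hlt).ne') U hU
  have := hUmax a ⟨haQ, haU⟩
  omega

lemma eventually_limsupEnvelope_le (z : X) :
    ∀ᶠ a in 𝓝 z, limsupEnvelope Q h N a ≤ limsupEnvelope Q h N z := by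
  rcases (limsupEnvelope_le (Q := Q) (h := h) z).eq_or_lt with hzN | hzN
  · exact .of_forall fun a => hzN ▸ limsupEnvelope_le a
  have hz : z ∉ closure (superlevelOn Q h (limsupEnvelope Q h N z + 1)) :=
    fun hz => (le_limsupEnvelope hzN hz).not_gt (Nat.lt_succ_self _)
  filter_upwards [isClosed_closure.isOpen_compl.mem_nhds hz] with a ha
  by_contra! hlt
  exact ha <| closure_mono (superlevelOn_antitone Q h hlt)
    (mem_closure_superlevelOn_limsupEnvelope (by omega))

end LimsupEnvelope

theorem locally_maximal_extension_general
    (r : ℕ)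
    (Q : Set (Metric.sphere (0 : EuclideanSpace ℝ (Fin r)) 1))
    (N : ℕ)
    (h : Metric.sphere (0 : EuclideanSpace ℝ (Fin r)) 1 → ℕ)
    (hbound : ∀ x ∈ Q, h x ≤ N)
    (hlocmax : ∀ b ∈ Q, ∃ U ∈ nhds b, ∀ a ∈ Q ∩ U, h a ≤ h b) :
    ∃ H : Metric.sphere (0 : EuclideanSpace ℝ (Fin r)) 1 → ℕ,
      (∀ x ∈ Q, H x = h x) ∧
      (∀ x, H x ≤ N) ∧
      (∀ z, ∃ U ∈ nhds z, ∀ a ∈ U, H a ≤ H z) :=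
  ⟨limsupEnvelope Q h N,
    fun x hx => limsupEnvelope_eq_of_mem hx (hbound x hx) (hlocmax x hx),
    limsupEnvelope_le,
    fun z => eventually_iff_exists_mem.mp (eventually_limsupEnvelope_le z)⟩

/-- Let `S` be the sphere of rays of a finite-dimensional real vector
space (the unit sphere in `ℝʳ`), `R ⊆ S` a dense open subset (the regular points) and
`Q ⊆ R` a subset dense in `R` (the rational regular points).  Let `h` be a bounded
`ℕ`-valued function on `Q` that is locally maximal: every `b ∈ Q` has a neighborhood
`U` with `h a ≤ h b` for all rational regular `a ∈ U`.  Then `h` extends to a function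
`H` on all of `S` that is bounded (by the same bound) and locally maximal. -/
theorem locally_maximal_extension
    (r : ℕ)
    (R Q : Set (Metric.sphere (0 : EuclideanSpace ℝ (Fin r)) 1))
    (hRopen : IsOpen R) (hRdense : Dense R)
    (hQR : Q ⊆ R)
    (hQdense : ∀ x ∈ R, x ∈ closure Q)
    (N : ℕ)
    (h : Metric.sphere (0 : EuclideanSpace ℝ (Fin r)) 1 → ℕ)
    (hbound : ∀ x ∈ Q, h x ≤ N)
    (hlocmax : ∀ b ∈ Q, ∃ U ∈ nhds b, ∀ a ∈ Q ∩ U, h a ≤ h b) :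
    ∃ H : Metric.sphere (0 : EuclideanSpace ℝ (Fin r)) 1 → ℕ,
      (∀ x ∈ Q, H x = h x) ∧
      (∀ x, H x ≤ N) ∧
      (∀ z, ∃ U ∈ nhds z, ∀ a ∈ U, H a ≤ H z) :=
  locally_maximal_extension_general r Q N h hbound hlocmax
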